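/- Let ν, τ be σ-maxitive measures on a σ-algebra 𝓑 and assume τ is σ-principal. Then ν ≪ τ if and only if ν ⋘ τ; in this situation the relative density of ν with respect to τ is unique τ-almost everywhere. -/

import Mathlib

/-!
For every rational `q ≥ 0` the measurable sets `B` with `ν B ≤ q` form a σ-ideal, so
σ-principality gives a set `L q` in it that contains every such `B` up to a `τ`-negligible set.
The candidate density is `f x = inf {q | x ∈ L q}`. Its sublevel sets satisfy `ν {f ≤ t} ≤ t`, and
since `ν ≪ τ` the part of `B` where `f` exceeds its essential supremum does not count, whence
`ν B ≤ ess sup_B f`; conversely `B ∩ {f > q} ⊆ B \ L q` is negligible as soon as `ν B ≤ q`.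
For uniqueness, if `f` and `g` are densities and `p < q`, then `ν` of `{f ≤ p} ∩ {q < g}` is at
most `p` and, unless the set is negligible, at least `q`; countably many such sets cover
`{f < g}`.
-/

open scoped ENNReal
open Set Filter MeasureTheory

variable {E : Type*}

/-- `f : E → [0,∞]` is `𝓑`-measurable: `{f > t}` is measurable for every `t`. -/
def Premeasurable [MeasurableSpace E] (f : E → ℝ≥0∞) : Prop :=
  ∀ t : ℝ≥0∞, MeasurableSet {x | t < f x}

/-- A maxitive measure on the σ-algebra of measurable subsets of `E`. -/
def Maxitive [MeasurableSpace E] (ν : Set E → ℝ≥0∞) : Prop :=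
  ν ∅ = 0 ∧ ∀ A B : Set E, MeasurableSet A → MeasurableSet B →
    ν (A ∪ B) = max (ν A) (ν B)

/-- A σ-maxitive measure: a maxitive measure commuting with countable nondecreasing unions. -/
def SigmaMaxitive [MeasurableSpace E] (ν : Set E → ℝ≥0∞) : Prop :=
  Maxitive ν ∧ ∀ B : ℕ → Set E, (∀ n, MeasurableSet (B n)) → Monotone B →
    ν (⋃ n, B n) = ⨆ n, ν (B n)

/-- `N` is `τ`-negligible: it is contained in a measurable set of `τ`-measure zero. -/
def Negligible [MeasurableSpace E] (τ : Set E → ℝ≥0∞) (N : Set E) : Prop :=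
  ∃ B : Set E, MeasurableSet B ∧ N ⊆ B ∧ τ B = 0

/-- The `τ`-essential supremum of `f` over `B`: `inf { t > 0 : B ∩ {f > t} is τ-negligible }`. -/
noncomputable def essSupOn [MeasurableSpace E] (τ : Set E → ℝ≥0∞) (f : E → ℝ≥0∞)
    (B : Set E) : ℝ≥0∞ :=
  sInf {t : ℝ≥0∞ | 0 < t ∧ Negligible τ (B ∩ {x | t < f x})}

/-- `ν ≪ τ`: absolute continuity. -/
def AbsCont [MeasurableSpace E] (ν τ : Set E → ℝ≥0∞) : Prop :=
  ∀ B : Set E, MeasurableSet B → τ B = 0 → ν B = 0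

/-- `ν ⋘ τ`: strong absolute continuity, i.e. `ν` has a measurable relative density
with respect to `τ`. -/
def StrongAbsCont [MeasurableSpace E] (ν τ : Set E → ℝ≥0∞) : Prop :=
  ∃ f : E → ℝ≥0∞, Premeasurable f ∧ ∀ B : Set E, MeasurableSet B → ν B = essSupOn τ f B

/-- `c` is a cardinal density of `ν`: `ν B = sup_{x ∈ B} c x` for every measurable `B`. -/
def IsCardinalDensity [MeasurableSpace E] (ν : Set E → ℝ≥0∞) (c : E → ℝ≥0∞) : Prop :=
  ∀ B : Set E, MeasurableSet B → ν B = ⨆ x ∈ B, c x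

/-- `τ` is essential: there exists a σ-finite σ-additive measure `m` with the same
null measurable sets. -/
def Essential [MeasurableSpace E] (τ : Set E → ℝ≥0∞) : Prop :=
  ∃ m : Measure E, SigmaFinite m ∧ ∀ B : Set E, MeasurableSet B → (0 < τ B ↔ 0 < m B)

/-- A σ-ideal of the σ-algebra of measurable sets. -/
def SigmaIdeal [MeasurableSpace E] (I : Set (Set E)) : Prop :=
  I.Nonempty ∧ (∀ S ∈ I, MeasurableSet S) ∧
  (∀ f : ℕ → Set E, (∀ n, f n ∈ I) → (⋃ n, f n) ∈ I) ∧
  (∀ B S : Set E, MeasurableSet B → S ∈ I → B ⊆ S → B ∈ I)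

/-- `τ` is σ-principal: every σ-ideal has a greatest element modulo `τ`-negligible sets. -/
def SigmaPrincipal [MeasurableSpace E] (τ : Set E → ℝ≥0∞) : Prop :=
  ∀ I : Set (Set E), SigmaIdeal I → ∃ L ∈ I, ∀ S ∈ I, Negligible τ (S \ L)

/-- A pseudo-multiplication on `[0,∞]`. -/
structure PseudoMul where
  op : ℝ≥0∞ → ℝ≥0∞ → ℝ≥0∞
  assoc : ∀ a b c, op (op a b) c = op a (op b c)
  contOn : ContinuousOn (fun q : ℝ≥0∞ × ℝ≥0∞ => op q.1 q.2) (Set.Ioo 0 ⊤ ×ˢ Set.univ)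
  contLeft : ∀ t, ContinuousOn (fun s => op s t) (Set.Ioi 0)
  monoLeft : ∀ t, Monotone fun s => op s t
  monoRight : ∀ s, Monotone (op s)
  one : ℝ≥0∞
  one_op : ∀ t, op one t = t
  eq_zero : ∀ s t, op s t = 0 → s = 0 ∨ t = 0
  zero_op : ∀ t, op 0 t = 0
  op_zero : ∀ t, op t 0 = 0

/-- `t` is `⊙`-finite: `inf_{s > 0} s ⊙ t = 0`. -/
def OdotFinite (p : PseudoMul) (t : ℝ≥0∞) : Prop :=
  (⨅ s ∈ Set.Ioi (0 : ℝ≥0∞), p.op s t) = 0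

/-- The idempotent `⊙`-integral `∫_B f ⊙ dτ = sup_{t ∈ [0,∞)} t ⊙ τ (B ∩ {f > t})`. -/
noncomputable def iInt [MeasurableSpace E] (p : PseudoMul) (τ : Set E → ℝ≥0∞)
    (f : E → ℝ≥0∞) (B : Set E) : ℝ≥0∞ :=
  ⨆ t ∈ Set.Iio (⊤ : ℝ≥0∞), p.op t (τ (B ∩ {x | t < f x}))

/-- `ν ≪_⊙ τ`: `ν B ≤ ∞ ⊙ τ B` for every measurable `B`. -/
def OdotAbsCont [MeasurableSpace E] (p : PseudoMul) (ν τ : Set E → ℝ≥0∞) : Prop :=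
  ∀ B : Set E, MeasurableSet B → ν B ≤ p.op ⊤ (τ B)

/-- `ν` is semi-`⊙`-finite. -/
def SemiOdotFinite [MeasurableSpace E] (p : PseudoMul) (ν : Set E → ℝ≥0∞) : Prop :=
  ∀ B : Set E, MeasurableSet B →
    ν B = ⨆ A ∈ {A : Set E | MeasurableSet A ∧ A ⊆ B ∧ OdotFinite p (ν A)}, ν A

/-- `τ` is σ-`⊙`-finite. -/
def SigmaOdotFinite [MeasurableSpace E] (p : PseudoMul) (τ : Set E → ℝ≥0∞) : Prop :=
  ∃ B : ℕ → Set E, (∀ n, MeasurableSet (B n)) ∧ (⋃ n, B n) = Set.univ ∧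
    ∀ n, OdotFinite p (τ (B n))

/-- Continuity from below. -/
def ContFromBelow [MeasurableSpace E] (ν : Set E → ℝ≥0∞) : Prop :=
  ∀ B : ℕ → Set E, (∀ n, MeasurableSet (B n)) → Monotone B →
    Tendsto (fun n => ν (B n)) atTop (nhds (ν (⋃ n, B n)))

/-- Continuity from above (no finiteness assumption). -/
def ContFromAbove [MeasurableSpace E] (ν : Set E → ℝ≥0∞) : Prop :=
  ∀ B : ℕ → Set E, (∀ n, MeasurableSet (B n)) → Antitone B →
    Tendsto (fun n => ν (B n)) atTop (nhds (ν (⋂ n, B n)))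

/-- An optimal measure: a maxitive measure continuous from below and from above. -/
def Optimal [MeasurableSpace E] (ν : Set E → ℝ≥0∞) : Prop :=
  Maxitive ν ∧ ContFromBelow ν ∧ ContFromAbove ν

noncomputable def levelSetDensity (L : ℚ → Set E) (x : E) : ℝ≥0∞ :=
  ⨅ (q : ℚ) (_ : x ∈ L q), ENNReal.ofReal q

section levelSetDensity

variable {L : ℚ → Set E}

lemma levelSetDensity_le_of_mem {x : E} {q : ℚ} (hx : x ∈ L q) :
    levelSetDensity L x ≤ ENNReal.ofReal q :=
  iInf₂_le q hx

lemma setOf_levelSetDensity_lt (s : ℝ≥0∞) :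
    {x | levelSetDensity L x < s} = ⋃ q : {q : ℚ // ENNReal.ofReal q < s}, L q := by
  ext x
  simp [levelSetDensity, iInf_lt_iff, and_comm]

end levelSetDensity

section

variable [MeasurableSpace E] {ν τ : Set E → ℝ≥0∞}

def IsRelDensity (ν τ : Set E → ℝ≥0∞) (f : E → ℝ≥0∞) : Prop :=
  ∀ B : Set E, MeasurableSet B → ν B = essSupOn τ f B

lemma measurableSet_accumulate {B : ℕ → Set E} (hB : ∀ n, MeasurableSet (B n)) (n : ℕ) :
    MeasurableSet (accumulate B n) := by
  rw [accumulate_def]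
  exact .iUnion fun k => .iUnion fun _ => hB k

namespace Maxitive

lemma mono (hν : Maxitive ν) {A B : Set E} (hA : MeasurableSet A) (hB : MeasurableSet B)
    (hAB : A ⊆ B) : ν A ≤ ν B := by
  simpa [union_eq_right.mpr hAB] using (hν.2 A B hA hB).ge

lemma apply_accumulate_le (hν : Maxitive ν) {B : ℕ → Set E} (hB : ∀ n, MeasurableSet (B n))
    (n : ℕ) : ν (accumulate B n) ≤ ⨆ k, ν (B k) := by
  induction n with
  | zero => simpa [accumulate_zero_nat] using le_iSup (fun k => ν (B k)) 0
  | succ n ih =>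
    rw [accumulate_succ, hν.2 _ _ (measurableSet_accumulate hB n) (hB _)]
    exact max_le ih (le_iSup (fun k => ν (B k)) _)

end Maxitive

namespace SigmaMaxitive

lemma apply_iUnion_nat_le (hν : SigmaMaxitive ν) {B : ℕ → Set E}
    (hB : ∀ n, MeasurableSet (B n)) : ν (⋃ n, B n) ≤ ⨆ n, ν (B n) := by
  rw [← iUnion_accumulate, hν.2 _ (measurableSet_accumulate hB) monotone_accumulate]
  exact iSup_le (hν.1.apply_accumulate_le hB)

lemma apply_iUnion_le {ι : Sort*} [Countable ι] (hν : SigmaMaxitive ν) {B : ι → Set E}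
    (hB : ∀ i, MeasurableSet (B i)) : ν (⋃ i, B i) ≤ ⨆ i, ν (B i) := by
  rcases isEmpty_or_nonempty ι with hι | hι
  · simp [hν.1.1]
  obtain ⟨e, he⟩ := exists_surjective_nat ι
  rw [← he.iUnion_comp, ← he.iSup_comp]
  exact hν.apply_iUnion_nat_le fun n => hB (e n)

lemma sigmaIdeal_setOf_le (hν : SigmaMaxitive ν) (t : ℝ≥0∞) :
    SigmaIdeal {B : Set E | MeasurableSet B ∧ ν B ≤ t} := by
  refine ⟨⟨∅, .empty, by simp [hν.1.1]⟩, fun S hS => hS.1, fun B hB => ?_,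
    fun B S hB hS hBS => ⟨hB, (hν.1.mono hB hS.1 hBS).trans hS.2⟩⟩
  exact ⟨.iUnion fun n => (hB n).1,
    (hν.apply_iUnion_nat_le fun n => (hB n).1).trans (iSup_le fun n => (hB n).2)⟩

end SigmaMaxitive

namespace Negligible

lemma mono {N M : Set E} (h : Negligible τ M) (hNM : N ⊆ M) : Negligible τ N :=
  let ⟨A, hA, hMA, hτA⟩ := h
  ⟨A, hA, hNM.trans hMA, hτA⟩

lemma empty (hτ : τ ∅ = 0) : Negligible τ (∅ : Set E) :=
  ⟨∅, .empty, subset_rfl, hτ⟩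

lemma union (hτ : Maxitive τ) {N M : Set E} (hN : Negligible τ N) (hM : Negligible τ M) :
    Negligible τ (N ∪ M) :=
  let ⟨A, hA, hNA, hτA⟩ := hN
  let ⟨B, hB, hMB, hτB⟩ := hM
  ⟨A ∪ B, hA.union hB, union_subset_union hNA hMB, by simp [hτ.2 A B hA hB, hτA, hτB]⟩

lemma iUnion {ι : Sort*} [Countable ι] (hτ : SigmaMaxitive τ) {N : ι → Set E}
    (hN : ∀ i, Negligible τ (N i)) : Negligible τ (⋃ i, N i) := by
  choose A hA hNA hτA using hN
  refine ⟨⋃ i, A i, .iUnion hA, iUnion_mono hNA, le_antisymm ?_ zero_le⟩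
  simpa [hτA] using hτ.apply_iUnion_le hA

end Negligible

section essSupOn

variable {f : E → ℝ≥0∞} {B : Set E}

lemma essSupOn_le_of_negligible {t : ℝ≥0∞} (ht : 0 < t)
    (h : Negligible τ (B ∩ {x | t < f x})) : essSupOn τ f B ≤ t :=
  sInf_le ⟨ht, h⟩

lemma essSupOn_eq_zero_of_negligible (hB : Negligible τ B) : essSupOn τ f B = 0 :=
  nonpos_iff_eq_zero.mp <| le_of_forall_gt_imp_ge_of_dense fun _ ht =>
    essSupOn_le_of_negligible ht (hB.mono inter_subset_left)

lemma essSupOn_le_of_forall_le (hτ : τ ∅ = 0) {a : ℝ≥0∞} (h : ∀ x ∈ B, f x ≤ a) :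
    essSupOn τ f B ≤ a := by
  refine le_of_forall_gt_imp_ge_of_dense fun t ht => essSupOn_le_of_negligible (pos_of_gt ht) ?_
  convert Negligible.empty hτ
  exact eq_empty_of_forall_notMem fun x ⟨hxB, hxt⟩ => (h x hxB).not_gt (ht.trans hxt)

lemma le_essSupOn_of_not_negligible {b : ℝ≥0∞} (h : ¬ Negligible τ (B ∩ {x | b < f x})) :
    b ≤ essSupOn τ f B := by
  refine le_sInf fun t ⟨_, ht⟩ => le_of_not_gt fun htb => h (ht.mono ?_)
  exact inter_subset_inter_right _ fun x hx => htb.trans hx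

end essSupOn

lemma StrongAbsCont.absCont (h : StrongAbsCont ν τ) : AbsCont ν τ := by
  obtain ⟨f, -, hf⟩ := h
  intro B hB hτB
  rw [hf B hB, essSupOn_eq_zero_of_negligible ⟨B, hB, subset_rfl, hτB⟩]

section levelSetDensity

variable {L : ℚ → Set E}

lemma measurable_levelSetDensity (hL : ∀ q, MeasurableSet (L q)) :
    Measurable (levelSetDensity L) :=
  measurable_of_Iio fun s => by
    change MeasurableSet {x | levelSetDensity L x < s}
    rw [setOf_levelSetDensity_lt]
    exact .iUnion fun q => hL q

lemma SigmaMaxitive.apply_setOf_levelSetDensity_le (hν : SigmaMaxitive ν)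
    (hL : ∀ q, MeasurableSet (L q)) (hνL : ∀ q : ℚ, ν (L q) ≤ ENNReal.ofReal q) (t : ℝ≥0∞) :
    ν {x | levelSetDensity L x ≤ t} ≤ t := by
  refine le_of_forall_gt_imp_ge_of_dense fun s hts => ?_
  calc ν {x | levelSetDensity L x ≤ t}
      ≤ ν {x | levelSetDensity L x < s} :=
        hν.1.mono (measurable_levelSetDensity hL measurableSet_Iic)
          (measurable_levelSetDensity hL measurableSet_Iio) fun x hx => lt_of_le_of_lt hx hts
    _ ≤ ⨆ q : {q : ℚ // ENNReal.ofReal q < s}, ν (L q) := by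
        rw [setOf_levelSetDensity_lt]
        exact hν.apply_iUnion_le fun q => hL q
    _ ≤ s := iSup_le fun q => (hνL q).trans q.2.le

end levelSetDensity

lemma isRelDensity_levelSetDensity {L : ℚ → Set E} (hν : SigmaMaxitive ν) (habs : AbsCont ν τ)
    (hL : ∀ q, MeasurableSet (L q)) (hνL : ∀ q : ℚ, ν (L q) ≤ ENNReal.ofReal q)
    (hLmax : ∀ (q : ℚ) S, MeasurableSet S → ν S ≤ ENNReal.ofReal q → Negligible τ (S \ L q)) :
    IsRelDensity ν τ (levelSetDensity L) := by
  intro B hB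
  refine le_antisymm (le_sInf fun t ⟨_, A, hA, hBA, hτA⟩ => ?_) ?_
  · have hle : MeasurableSet {x | levelSetDensity L x ≤ t} :=
      measurable_levelSetDensity hL measurableSet_Iic
    have hcover : B ⊆ {x | levelSetDensity L x ≤ t} ∪ A := fun x hx =>
      (le_or_gt _ t).imp id fun hxt => hBA ⟨hx, hxt⟩
    calc ν B ≤ ν ({x | levelSetDensity L x ≤ t} ∪ A) := hν.1.mono hB (hle.union hA) hcover
      _ = max (ν {x | levelSetDensity L x ≤ t}) (ν A) := hν.1.2 _ _ hle hA
      _ ≤ t := by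
          rw [habs A hA hτA, max_zero]
          exact hν.apply_setOf_levelSetDensity_le hL hνL t
  · refine le_of_forall_gt_imp_ge_of_dense fun b hb => ?_
    obtain ⟨q, -, hBq, hqb⟩ := ENNReal.lt_iff_exists_rat_btwn.mp hb
    refine (essSupOn_le_of_negligible (pos_of_gt hBq) ((hLmax q B hB hBq.le).mono ?_)).trans
      hqb.le
    exact fun x ⟨hxB, hqx⟩ => ⟨hxB, fun hxL => (levelSetDensity_le_of_mem hxL).not_gt hqx⟩

lemma AbsCont.strongAbsCont (hν : SigmaMaxitive ν) (hprin : SigmaPrincipal τ) (h : AbsCont ν τ) :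
    StrongAbsCont ν τ := by
  choose L hL hLmax using fun q : ℚ => hprin _ (hν.sigmaIdeal_setOf_le (ENNReal.ofReal q))
  exact ⟨levelSetDensity L, fun t => measurable_levelSetDensity (fun q => (hL q).1)
    measurableSet_Ioi, isRelDensity_levelSetDensity hν h (fun q => (hL q).1) (fun q => (hL q).2)
    fun q S hS hSq => hLmax q S ⟨hS, hSq⟩⟩

namespace IsRelDensity

variable {f g : E → ℝ≥0∞}

lemma negligible_le_inter_lt (hτ : τ ∅ = 0) (hf : Premeasurable f) (hg : Premeasurable g)
    (hνf : IsRelDensity ν τ f) (hνg : IsRelDensity ν τ g) {a b : ℝ≥0∞} (hab : a < b) :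
    Negligible τ ({x | f x ≤ a} ∩ {x | b < g x}) := by
  by_contra hC
  have hCmeas : MeasurableSet ({x | f x ≤ a} ∩ {x | b < g x}) := by
    simpa [compl_ofPred, not_lt] using (hf a).compl.inter (hg b)
  have hfC := (hνf _ hCmeas).trans_le (essSupOn_le_of_forall_le hτ fun x hx => hx.1)
  have hgC := (hνg _ hCmeas).trans_ge <| le_essSupOn_of_not_negligible <| by
    rwa [inter_eq_left.mpr inter_subset_right]
  exact (hgC.trans hfC).not_gt hab

lemma negligible_setOf_lt (hτ : SigmaMaxitive τ) (hf : Premeasurable f) (hg : Premeasurable g)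
    (hνf : IsRelDensity ν τ f) (hνg : IsRelDensity ν τ g) : Negligible τ {x | f x < g x} := by
  refine (Negligible.iUnion hτ fun p : ℚ => Negligible.iUnion hτ fun q : ℚ =>
    Negligible.iUnion hτ fun hpq : ENNReal.ofReal p < ENNReal.ofReal q =>
      negligible_le_inter_lt hτ.1.1 hf hg hνf hνg hpq).mono fun x hx => ?_
  obtain ⟨q, -, hfq, hqg⟩ := ENNReal.lt_iff_exists_rat_btwn.mp hx
  obtain ⟨p, -, hfp, hpq⟩ := ENNReal.lt_iff_exists_rat_btwn.mp hfq
  exact mem_iUnion.mpr ⟨p, mem_iUnion.mpr ⟨q, mem_iUnion.mpr ⟨hpq, hfp.le, hqg⟩⟩⟩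

end IsRelDensity

end

/-- If `τ` is σ-principal, then `ν ≪ τ` iff `ν ⋘ τ`, and the relative density is unique
`τ`-almost everywhere. -/
theorem sigmaPrincipal_absCont_iff_strongAbsCont [MeasurableSpace E]
    (ν τ : Set E → ℝ≥0∞) (hν : SigmaMaxitive ν) (hτ : SigmaMaxitive τ)
    (hprin : SigmaPrincipal τ) :
    (AbsCont ν τ ↔ StrongAbsCont ν τ) ∧
    (∀ f g : E → ℝ≥0∞, Premeasurable f → Premeasurable g →
      (∀ B : Set E, MeasurableSet B → ν B = essSupOn τ f B) →
      (∀ B : Set E, MeasurableSet B → ν B = essSupOn τ g B) →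
      Negligible τ {x | f x ≠ g x}) := by
  refine ⟨⟨fun h => h.strongAbsCont hν hprin, StrongAbsCont.absCont⟩,
    fun f g hf hg hνf hνg => ?_⟩
  have hlt := IsRelDensity.negligible_setOf_lt hτ hf hg hνf hνg
  have hgt := IsRelDensity.negligible_setOf_lt hτ hg hf hνg hνf
  exact (hlt.union hτ.1 hgt).mono fun x hx => lt_or_gt_of_ne hx
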